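/- In the Golub–Kahan bidiagonalization setup, for every k with 1 ≤ k ≤ n−1 one has γ_k^{lsqr} < γ_k^{cgme} < γ_{k−1}^{lsqr}; that is, the spectral-norm error of the rank-k approximation P_k P_kᵀ A to A lies strictly between the LSQR rank-k error γ_k^{lsqr} and the LSQR rank-(k−1) error γ_{k−1}^{lsqr}. -/

import Mathlib

/-!
Since `P` and `Q` are isometries, `γ_k^{lsqr} = ‖X_k‖` and `γ_k^{cgme} = ‖Y_k‖`, where `X_k` is `B`
with its first `k` columns zeroed and `Y_k` is `B` with its first `k` rows zeroed. `Y_k` is `X_k`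
with its zero column `k` filled by `β_{k+1} e_{k+1}`, and `X_{k-1}` is `Y_k` with its zero row `k`
filled by `α_k e_k`. Filling a zero row of `M` with `r` adds `(r ⬝ x)²` to `‖M x‖²`, so the norm
strictly increases as soon as `r` is not orthogonal to a top right singular vector `x` of `M`
(columns are handled by transposing). Here `r` is a multiple of a coordinate vector, and that
coordinate of `x` is nonzero: `x` is an eigenvector, for a nonzero eigenvalue, of a Gram matrix that
is tridiagonal with nonzero off-diagonal entries on its active block, and the three-term recurrence
would otherwise force `x = 0`.
-/

open Matrix

/-- Spectral norm (largest singular value) of a real matrix. -/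
noncomputable def specNorm {a b : ℕ} (M : Matrix (Fin a) (Fin b) ℝ) : ℝ :=
  ‖LinearMap.toContinuousLinearMap (Matrix.toEuclideanLin M)‖

/-- The `j`-th largest singular value of a real matrix (`j ≥ 1`), characterized via the
Eckart–Young theorem as the minimal spectral-norm distance to matrices of rank `< j`;
it is `0` when `j` exceeds the smaller dimension. -/
noncomputable def singVal {a b : ℕ} (M : Matrix (Fin a) (Fin b) ℝ) (j : ℕ) : ℝ :=
  sInf {r : ℝ | ∃ D : Matrix (Fin a) (Fin b) ℝ, D.rank < j ∧ r = specNorm (M - D)}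

/-- The matrix of the first `k` columns of `M`. -/
def colSub {a b : ℕ} (M : Matrix (Fin a) (Fin b) ℝ) (k : ℕ) (hk : k ≤ b) :
    Matrix (Fin a) (Fin k) ℝ :=
  M.submatrix id fun j => ⟨j.1, lt_of_lt_of_le j.2 hk⟩

/-- The leading `r × c` submatrix of `M`. -/
def subUL {a b : ℕ} (M : Matrix (Fin a) (Fin b) ℝ) (r c : ℕ) (hr : r ≤ a) (hc : c ≤ b) :
    Matrix (Fin r) (Fin c) ℝ :=
  M.submatrix (fun i => ⟨i.1, lt_of_lt_of_le i.2 hr⟩) (fun j => ⟨j.1, lt_of_lt_of_le j.2 hc⟩)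

open scoped Matrix.Norms.L2Operator

namespace ContinuousLinearMap

variable {E F : Type*} [NormedAddCommGroup E] [InnerProductSpace ℝ E] [FiniteDimensional ℝ E]
  [Nontrivial E] [NormedAddCommGroup F] [InnerProductSpace ℝ F] [CompleteSpace F]

/-- A maximizer of `‖S x‖` on the unit sphere maximizes the Rayleigh quotient of `S† S`,
hence is an eigenvector of it. -/
theorem exists_ne_zero_adjoint_comp_self_apply_eq (S : E →L[ℝ] F) :
    ∃ x ≠ 0, (adjoint S ∘L S) x = ‖S‖ ^ 2 • x := by
  obtain ⟨x₀, hx₀, hSx₀⟩ : ∃ x ∈ Metric.sphere (0 : E) 1, ‖S x‖ = ‖S‖ := by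
    rw [← S.sSup_sphere_eq_norm]
    exact (isCompact_sphere 0 1).image (continuous_norm.comp S.continuous)
      |>.sSup_mem ((NormedSpace.sphere_nonempty.mpr zero_le_one).image _)
  rw [mem_sphere_zero_iff_norm] at hx₀
  have hx₀ne : x₀ ≠ 0 := norm_ne_zero_iff.mp (by simp [hx₀])
  have hT : IsSelfAdjoint (adjoint S ∘L S) := by
    rw [isSelfAdjoint_iff', adjoint_comp, adjoint_adjoint]
  have hmax : IsMaxOn (adjoint S ∘L S).reApplyInnerSelf (Metric.sphere 0 ‖x₀‖) x₀ := by
    intro x hx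
    rw [hx₀, mem_sphere_zero_iff_norm] at hx
    simp only [Set.mem_ofPred_eq, reApplyInnerSelf_apply, ← apply_norm_sq_eq_inner_adjoint_left,
      hSx₀]
    simpa [hx] using pow_le_pow_left₀ (norm_nonneg _) (S.le_opNorm x) 2
  have hρ : (adjoint S ∘L S).rayleighQuotient x₀ = ‖S‖ ^ 2 := by
    rw [rayleighQuotient, reApplyInnerSelf_apply, ← apply_norm_sq_eq_inner_adjoint_left, hSx₀, hx₀,
      one_pow, div_one]
  refine ⟨x₀, hx₀ne, ?_⟩
  rw [← hρ]
  exact (hT.hasEigenvector_of_isLocalExtrOn hx₀ne (Or.inr hmax.localize)).apply_eq_smul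

end ContinuousLinearMap

section specNorm

variable {a b c : ℕ}

theorem specNorm_eq_l2_opNorm (M : Matrix (Fin a) (Fin b) ℝ) : specNorm M = ‖M‖ := rfl

theorem specNorm_nonneg (M : Matrix (Fin a) (Fin b) ℝ) : 0 ≤ specNorm M := norm_nonneg _

theorem specNorm_ne_zero {M : Matrix (Fin a) (Fin b) ℝ} (hM : M ≠ 0) : specNorm M ≠ 0 := by
  rw [specNorm_eq_l2_opNorm]
  exact norm_ne_zero_iff.mpr hM

theorem specNorm_transpose (M : Matrix (Fin a) (Fin b) ℝ) : specNorm Mᵀ = specNorm M := by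
  simpa [specNorm_eq_l2_opNorm] using l2_opNorm_conjTranspose M

theorem specNorm_mul_le (M : Matrix (Fin a) (Fin b) ℝ) (N : Matrix (Fin b) (Fin c) ℝ) :
    specNorm (M * N) ≤ specNorm M * specNorm N :=
  l2_opNorm_mul M N

theorem dotProduct_mulVec_self_le (M : Matrix (Fin a) (Fin b) ℝ) (x : Fin b → ℝ) :
    (M *ᵥ x) ⬝ᵥ (M *ᵥ x) ≤ specNorm M ^ 2 * (x ⬝ᵥ x) := by
  have h : ‖WithLp.toLp 2 (M *ᵥ x)‖ ≤ specNorm M * ‖WithLp.toLp 2 x‖ :=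
    l2_opNorm_mulVec M (WithLp.toLp 2 x)
  have hsq {d : ℕ} (v : Fin d → ℝ) : ‖WithLp.toLp 2 v‖ ^ 2 = v ⬝ᵥ v := by
    rw [EuclideanSpace.norm_sq_eq]
    simp [dotProduct, sq]
  rw [← hsq, ← hsq, ← mul_pow]
  exact pow_le_pow_left₀ (norm_nonneg _) h 2

theorem specNorm_le_one_of_transpose_mul_self {P : Matrix (Fin a) (Fin b) ℝ} (hP : Pᵀ * P = 1) :
    specNorm P ≤ 1 := by
  have h := l2_opNorm_conjTranspose_mul_self P
  rw [conjTranspose_eq_transpose_of_trivial, hP] at h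
  have h1 : ‖(1 : Matrix (Fin b) (Fin b) ℝ)‖ ≤ 1 := by
    rw [← diagonal_one, l2_opNorm_diagonal]
    exact (pi_norm_const_le (1 : ℝ)).trans norm_one.le
  rw [specNorm_eq_l2_opNorm]
  nlinarith [norm_nonneg P]

theorem specNorm_isometry_mul {P : Matrix (Fin a) (Fin b) ℝ} (hP : Pᵀ * P = 1)
    (M : Matrix (Fin b) (Fin c) ℝ) : specNorm (P * M) = specNorm M := by
  have hP1 := specNorm_le_one_of_transpose_mul_self hP
  refine le_antisymm ?_ ?_
  · calc specNorm (P * M) ≤ specNorm P * specNorm M := specNorm_mul_le P M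
      _ ≤ specNorm M := mul_le_of_le_one_left (specNorm_nonneg M) hP1
  · calc specNorm M = specNorm (Pᵀ * (P * M)) := by rw [← Matrix.mul_assoc, hP, Matrix.one_mul]
      _ ≤ specNorm Pᵀ * specNorm (P * M) := specNorm_mul_le _ _
      _ ≤ specNorm (P * M) := by
        rw [specNorm_transpose]
        exact mul_le_of_le_one_left (specNorm_nonneg _) hP1

theorem specNorm_mul_transpose_isometry {Q : Matrix (Fin b) (Fin c) ℝ} (hQ : Qᵀ * Q = 1)
    (M : Matrix (Fin a) (Fin c) ℝ) : specNorm (M * Qᵀ) = specNorm M := by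
  rw [← specNorm_transpose, transpose_mul, transpose_transpose, specNorm_isometry_mul hQ,
    specNorm_transpose]

theorem exists_ne_zero_transpose_mul_mulVec_eq [NeZero b] (M : Matrix (Fin a) (Fin b) ℝ) :
    ∃ x ≠ 0, (Mᵀ * M) *ᵥ x = specNorm M ^ 2 • x := by
  obtain ⟨x, hx, hMx⟩ :=
    (LinearMap.toContinuousLinearMap (toEuclideanLin M)).exists_ne_zero_adjoint_comp_self_apply_eq
  have hadj : ContinuousLinearMap.adjoint (LinearMap.toContinuousLinearMap (toEuclideanLin M)) =
      LinearMap.toContinuousLinearMap (toEuclideanLin Mᵀ) := by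
    rw [← LinearMap.adjoint_toContinuousLinearMap, ← conjTranspose_eq_transpose_of_trivial,
      toEuclideanLin_conjTranspose_eq_adjoint]
  rw [hadj] at hMx
  refine ⟨WithLp.ofLp x, by simpa using hx, ?_⟩
  simpa [← mulVec_mulVec, specNorm] using congrArg WithLp.ofLp hMx

theorem specNorm_lt_specNorm_updateRow {M : Matrix (Fin a) (Fin b) ℝ} {i : Fin a}
    (hMi : ∀ j, M i j = 0) {r x : Fin b → ℝ} (hx : (Mᵀ * M) *ᵥ x = specNorm M ^ 2 • x)
    (hrx : r ⬝ᵥ x ≠ 0) : specNorm M < specNorm (M.updateRow i r) := by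
  have hx0 : x ≠ 0 := by rintro rfl; simp at hrx
  have hxx : 0 < x ⬝ᵥ x := (Fintype.sum_nonneg fun j => mul_self_nonneg (x j)).lt_of_ne'
    (dotProduct_self_eq_zero.not.mpr hx0)
  have hMxi : (M *ᵥ x) i = 0 := by simp [mulVec, dotProduct, hMi]
  have hMx : (M *ᵥ x) ⬝ᵥ (M *ᵥ x) = specNorm M ^ 2 * (x ⬝ᵥ x) := by
    nth_rw 1 [← vecMul_transpose]
    rw [← dotProduct_mulVec, mulVec_mulVec, hx, dotProduct_smul, smul_eq_mul]
  have hupd : M.updateRow i r *ᵥ x = M *ᵥ x + Pi.single i (r ⬝ᵥ x) := by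
    ext j
    rcases eq_or_ne j i with rfl | hj
    · simp [updateRow_mulVec, hMxi]
    · simp [updateRow_mulVec, hj]
  have key : specNorm M ^ 2 * (x ⬝ᵥ x) < specNorm (M.updateRow i r) ^ 2 * (x ⬝ᵥ x) :=
    calc specNorm M ^ 2 * (x ⬝ᵥ x) < specNorm M ^ 2 * (x ⬝ᵥ x) + (r ⬝ᵥ x) ^ 2 :=
          lt_add_of_pos_right _ (by positivity)
      _ = (M.updateRow i r *ᵥ x) ⬝ᵥ (M.updateRow i r *ᵥ x) := by
        simp [hupd, add_dotProduct, dotProduct_add, hMx, hMxi]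
        ring
      _ ≤ _ := dotProduct_mulVec_self_le _ x
  exact lt_of_pow_lt_pow_left₀ 2 (specNorm_nonneg _) (lt_of_mul_lt_mul_right key hxx.le)

end specNorm

namespace Matrix

/-- In an eigenvector of an unreduced upper Hessenberg matrix, each entry determines the next one
through a row of the eigenvalue equation. -/
theorem apply_ne_zero_of_mulVec_eq_smul {K : Type*} [Field K] {N : ℕ}
    {T : Matrix (Fin N) (Fin N) K} {p : Fin N}
    (hlow : ∀ i j : Fin N, (i : ℕ) < p → T i j = 0)
    (hhess : ∀ i j : Fin N, (i : ℕ) + 1 < j → T i j = 0)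
    (hsup : ∀ i j : Fin N, (p : ℕ) ≤ i → (j : ℕ) = i + 1 → T i j ≠ 0)
    {μ : K} (hμ : μ ≠ 0) {u : Fin N → K} (hu : u ≠ 0) (h : T *ᵥ u = μ • u) : u p ≠ 0 := by
  intro hp
  have hrow (i : Fin N) : ∑ j, T i j * u j = μ * u i := congrFun h i
  have hbelow (i : Fin N) (hi : (i : ℕ) < p) : u i = 0 := by
    simpa [hlow i _ hi, hμ] using (hrow i).symm
  suffices H : ∀ s : ℕ, ∀ i : Fin N, (i : ℕ) ≤ p + s → u i = 0 from
    hu (funext fun i => H i i (by omega))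
  intro s
  induction s with
  | zero =>
    intro i hi
    rcases Nat.lt_or_eq_of_le hi with hi | hi
    · exact hbelow i hi
    · rwa [show i = p from Fin.ext (by omega)]
  | succ s ih =>
    intro i hi
    rcases Nat.lt_or_ge (i : ℕ) (p + s + 1) with hi' | hi'
    · exact ih i (by omega)
    set t : Fin N := ⟨p + s, by omega⟩
    have hsum : ∑ j, T t j * u j = T t i * u i := by
      refine Finset.sum_eq_single_of_mem i (Finset.mem_univ _) fun j _ hj => ?_
      rcases Nat.lt_or_ge (j : ℕ) i with hj' | hj'
      · rw [ih j (by omega), mul_zero]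
      · rw [hhess t j (by simp [t]; omega), zero_mul]
    have hti : T t i * u i = 0 := by rw [← hsum, hrow t, ih t le_rfl, mul_zero]
    exact (mul_eq_zero.mp hti).resolve_left (hsup t i (by simp [t]) (by simp [t]; omega))

section Gram

variable {R : Type*} [NonUnitalNonAssocSemiring R] {a b : ℕ} {M : Matrix (Fin a) (Fin b) R}

theorem mul_transpose_apply_eq_zero_of_succ_lt
    (hM : ∀ i j, M i j ≠ 0 → (i : ℕ) = j ∨ (i : ℕ) = j + 1) {i l : Fin a}
    (hil : (i : ℕ) + 1 < l) : (M * Mᵀ) i l = 0 := by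
  rw [mul_apply]
  refine Finset.sum_eq_zero fun j _ => ?_
  by_contra h
  rcases hM _ _ (left_ne_zero_of_mul h) with h1 | h1 <;>
    rcases hM _ _ (right_ne_zero_of_mul h) with h2 | h2 <;> omega

theorem mul_transpose_apply_of_eq_succ
    (hM : ∀ i j, M i j ≠ 0 → (i : ℕ) = j ∨ (i : ℕ) = j + 1) {i l : Fin a} {j : Fin b}
    (hj : (j : ℕ) = i) (hl : (l : ℕ) = i + 1) : (M * Mᵀ) i l = M i j * M l j := by
  refine Finset.sum_eq_single_of_mem j (Finset.mem_univ _) fun j' _ hj' => ?_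
  by_contra h
  rcases hM _ _ (left_ne_zero_of_mul h) with h1 | h1 <;>
    rcases hM _ _ (right_ne_zero_of_mul h) with h2 | h2 <;> simp only [transpose_apply] at * <;>
    omega

theorem transpose_mul_apply_eq_zero_of_succ_lt
    (hM : ∀ i j, M i j ≠ 0 → (i : ℕ) = j ∨ (i : ℕ) = j + 1) {j l : Fin b}
    (hjl : (j : ℕ) + 1 < l) : (Mᵀ * M) j l = 0 := by
  rw [mul_apply]
  refine Finset.sum_eq_zero fun i _ => ?_
  by_contra h
  rcases hM _ _ (left_ne_zero_of_mul h) with h1 | h1 <;>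
    rcases hM _ _ (right_ne_zero_of_mul h) with h2 | h2 <;> omega

theorem transpose_mul_apply_of_eq_succ
    (hM : ∀ i j, M i j ≠ 0 → (i : ℕ) = j ∨ (i : ℕ) = j + 1) {j l : Fin b} {i : Fin a}
    (hi : (i : ℕ) = j + 1) (hl : (l : ℕ) = j + 1) : (Mᵀ * M) j l = M i j * M i l := by
  refine Finset.sum_eq_single_of_mem i (Finset.mem_univ _) fun i' _ hi' => ?_
  by_contra h
  rcases hM _ _ (left_ne_zero_of_mul h) with h1 | h1 <;>
    rcases hM _ _ (right_ne_zero_of_mul h) with h2 | h2 <;> simp only [transpose_apply] at * <;>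
    omega

end Gram

end Matrix

def headProj (b k : ℕ) : Matrix (Fin b) (Fin b) ℝ := diagonal fun j => if (j : ℕ) < k then 1 else 0

theorem mul_one_sub_headProj_apply {a b : ℕ} (M : Matrix (Fin a) (Fin b) ℝ) (k : ℕ) (i : Fin a)
    (j : Fin b) :
    (M * (1 - headProj b k) : Matrix (Fin a) (Fin b) ℝ) i j = if k ≤ (j : ℕ) then M i j else 0 := by
  rw [Matrix.mul_sub, Matrix.mul_one, Matrix.sub_apply, headProj, mul_diagonal]
  split_ifs <;> first | omega | simp

theorem one_sub_headProj_mul_apply {a b : ℕ} (M : Matrix (Fin a) (Fin b) ℝ) (k : ℕ) (i : Fin a)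
    (j : Fin b) :
    ((1 - headProj a k) * M : Matrix (Fin a) (Fin b) ℝ) i j = if k ≤ (i : ℕ) then M i j else 0 := by
  rw [Matrix.sub_mul, Matrix.one_mul, Matrix.sub_apply, headProj, diagonal_mul]
  split_ifs <;> first | omega | simp

theorem Fin.sum_univ_ite_lt {M : Type*} [AddCommMonoid M] {b k : ℕ} (hk : k ≤ b) (f : Fin b → M) :
    ∑ j : Fin b, (if (j : ℕ) < k then f j else 0) = ∑ j : Fin k, f (Fin.castLE hk j) := by
  rw [← Finset.sum_filter]
  refine Eq.trans ?_ (Finset.sum_map _ (Fin.castLEEmb hk) f)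
  congr 1
  ext j
  simp only [Finset.mem_filter, Finset.mem_univ, true_and, Finset.mem_map, Fin.castLEEmb_apply]
  exact ⟨fun h => ⟨⟨j, h⟩, rfl⟩, by rintro ⟨r, -, rfl⟩; exact r.isLt⟩

theorem colSub_mul_transpose {a b : ℕ} (M : Matrix (Fin a) (Fin b) ℝ) (k : ℕ) (hk : k ≤ b) :
    colSub M k hk * (colSub M k hk)ᵀ = M * headProj b k * Mᵀ := by
  ext i l
  rw [mul_apply, mul_apply]
  simp only [headProj, mul_diagonal, transpose_apply, colSub, submatrix_apply, id, mul_ite,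
    mul_one, mul_zero, ite_mul, zero_mul]
  exact (Fin.sum_univ_ite_lt hk fun j => M i j * M l j).symm

theorem mul_one_sub_mul_transpose {m n p R : Type*} [Fintype n] [Fintype p] [DecidableEq n]
    [CommRing R] {P : Matrix m p R} {B : Matrix p n R} {Q : Matrix n n R} (hQ : Qᵀ * Q = 1)
    (D : Matrix n n R) : P * B * Qᵀ * (1 - Q * D * Qᵀ) = P * (B * (1 - D)) * Qᵀ := by
  simp only [Matrix.mul_sub, Matrix.sub_mul, Matrix.mul_one, Matrix.mul_assoc]
  rw [← Matrix.mul_assoc Qᵀ Q, hQ, Matrix.one_mul]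

theorem one_sub_mul_transpose_mul {m n p R : Type*} [Fintype m] [Fintype n] [Fintype p]
    [DecidableEq m] [DecidableEq p] [CommRing R] {P : Matrix m p R} {B : Matrix p n R}
    (Q : Matrix n n R) (hP : Pᵀ * P = 1) (D : Matrix p p R) :
    (1 - P * D * Pᵀ) * (P * B * Qᵀ) = P * ((1 - D) * B) * Qᵀ := by
  simp only [Matrix.mul_sub, Matrix.sub_mul, Matrix.one_mul, Matrix.mul_assoc]
  rw [← Matrix.mul_assoc Pᵀ P, hP, Matrix.one_mul]

def lowerBidiagonal {n : ℕ} (α β : Fin n → ℝ) : Matrix (Fin (n + 1)) (Fin n) ℝ :=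
  of fun i j => if (i : ℕ) = j then α j else if (i : ℕ) = j + 1 then β j else 0

namespace lowerBidiagonal

variable {n : ℕ} {α β : Fin n → ℝ} {k : ℕ}

theorem apply_ne_zero {i : Fin (n + 1)} {j : Fin n} (h : lowerBidiagonal α β i j ≠ 0) :
    (i : ℕ) = j ∨ (i : ℕ) = j + 1 := by
  contrapose! h
  simp [lowerBidiagonal, h.1, h.2]

theorem mul_one_sub_headProj_apply_ne_zero {i : Fin (n + 1)} {j : Fin n}
    (h : (lowerBidiagonal α β * (1 - headProj n k) : Matrix (Fin (n + 1)) (Fin n) ℝ) i j ≠ 0) :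
    k ≤ (j : ℕ) ∧ ((i : ℕ) = j ∨ (i : ℕ) = j + 1) := by
  rw [mul_one_sub_headProj_apply] at h
  split_ifs at h with hj
  exacts [⟨hj, apply_ne_zero h⟩, absurd rfl h]

theorem one_sub_headProj_mul_apply_ne_zero {i : Fin (n + 1)} {j : Fin n}
    (h : ((1 - headProj (n + 1) k) * lowerBidiagonal α β : Matrix (Fin (n + 1)) (Fin n) ℝ) i j ≠
      0) :
    k ≤ (i : ℕ) ∧ ((i : ℕ) = j ∨ (i : ℕ) = j + 1) := by
  rw [one_sub_headProj_mul_apply] at h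
  split_ifs at h with hi
  exacts [⟨hi, apply_ne_zero h⟩, absurd rfl h]

theorem transpose_one_sub_headProj_mul (hk1 : 1 ≤ k) (hkn : k < n) :
    ((1 - headProj (n + 1) k) * lowerBidiagonal α β)ᵀ =
      (lowerBidiagonal α β * (1 - headProj n k))ᵀ.updateRow ⟨k - 1, by omega⟩
        (Pi.single ⟨k, by omega⟩ (β ⟨k - 1, by omega⟩)) := by
  ext j i
  simp only [transpose_apply, updateRow_apply, mul_one_sub_headProj_apply,
    one_sub_headProj_mul_apply, Pi.single_apply, lowerBidiagonal, of_apply, Fin.ext_iff]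
  split_ifs <;> first | omega | rfl | (congr 1; ext; omega)

theorem mul_one_sub_headProj_pred (hk1 : 1 ≤ k) (hkn : k < n) :
    lowerBidiagonal α β * (1 - headProj n (k - 1)) =
      ((1 - headProj (n + 1) k) * lowerBidiagonal α β).updateRow ⟨k - 1, by omega⟩
        (Pi.single ⟨k - 1, by omega⟩ (α ⟨k - 1, by omega⟩)) := by
  ext i j
  simp only [updateRow_apply, mul_one_sub_headProj_apply, one_sub_headProj_mul_apply,
    Pi.single_apply, lowerBidiagonal, of_apply, Fin.ext_iff]
  split_ifs <;> first | omega | rfl | (congr 1; ext; omega)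

theorem specNorm_mul_one_sub_headProj_lt (hα : ∀ i, α i ≠ 0) (hβ : ∀ i, β i ≠ 0)
    (hk1 : 1 ≤ k) (hkn : k < n) :
    specNorm (lowerBidiagonal α β * (1 - headProj n k)) <
      specNorm ((1 - headProj (n + 1) k) * lowerBidiagonal α β) := by
  set X := lowerBidiagonal α β * (1 - headProj n k)
  have hXsupp (i j) (h : X i j ≠ 0) : k ≤ (j : ℕ) ∧ ((i : ℕ) = j ∨ (i : ℕ) = j + 1) :=
    mul_one_sub_headProj_apply_ne_zero h
  have hXne : Xᵀ ≠ 0 := fun h => hα ⟨k, hkn⟩ <| by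
    simpa [X, mul_one_sub_headProj_apply, lowerBidiagonal] using
      congr_fun₂ h ⟨k, hkn⟩ ⟨k, by omega⟩
  obtain ⟨u, hu, hXu⟩ := exists_ne_zero_transpose_mul_mulVec_eq Xᵀ
  have huk : u ⟨k, by omega⟩ ≠ 0 := by
    refine apply_ne_zero_of_mulVec_eq_smul (T := X * Xᵀ) ?_
      (fun i l => mul_transpose_apply_eq_zero_of_succ_lt fun i j h => (hXsupp i j h).2) ?_
      (pow_ne_zero 2 (specNorm_ne_zero hXne)) hu (by rwa [transpose_transpose] at hXu)
    · intro i l hi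
      rw [mul_apply]
      refine Finset.sum_eq_zero fun j _ => ?_
      by_contra h
      have := hXsupp i j (left_ne_zero_of_mul h)
      simp only at hi
      omega
    · intro i l hi hl
      rw [mul_transpose_apply_of_eq_succ (fun i j h => (hXsupp i j h).2) (j := ⟨i, by omega⟩)
        rfl hl]
      simp only at hi
      simp [X, mul_one_sub_headProj_apply, lowerBidiagonal, hi, hl, hα, hβ]
  rw [← specNorm_transpose X, ← specNorm_transpose ((1 - headProj (n + 1) k) * _),
    transpose_one_sub_headProj_mul hk1 hkn]
  refine specNorm_lt_specNorm_updateRow (fun i => by_contra fun h => ?_) hXu ?_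
  · have := (hXsupp _ _ h).1
    simp only at this
    omega
  · simpa [single_dotProduct] using mul_ne_zero (hβ _) huk

theorem specNorm_one_sub_headProj_mul_lt (hα : ∀ i, α i ≠ 0) (hβ : ∀ i, β i ≠ 0)
    (hk1 : 1 ≤ k) (hkn : k < n) :
    specNorm ((1 - headProj (n + 1) k) * lowerBidiagonal α β) <
      specNorm (lowerBidiagonal α β * (1 - headProj n (k - 1))) := by
  set Y := (1 - headProj (n + 1) k) * lowerBidiagonal α β
  have hYsupp (i j) (h : Y i j ≠ 0) : k ≤ (i : ℕ) ∧ ((i : ℕ) = j ∨ (i : ℕ) = j + 1) :=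
    one_sub_headProj_mul_apply_ne_zero h
  have hYne : Y ≠ 0 := fun h => hα ⟨k, hkn⟩ <| by
    simpa [Y, one_sub_headProj_mul_apply, lowerBidiagonal] using
      congr_fun₂ h ⟨k, by omega⟩ ⟨k, hkn⟩
  have : NeZero n := ⟨by omega⟩
  obtain ⟨x, hx, hYx⟩ := exists_ne_zero_transpose_mul_mulVec_eq Y
  have hxk : x ⟨k - 1, by omega⟩ ≠ 0 := by
    refine apply_ne_zero_of_mulVec_eq_smul (T := Yᵀ * Y) ?_
      (fun j l => transpose_mul_apply_eq_zero_of_succ_lt fun i j h => (hYsupp i j h).2) ?_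
      (pow_ne_zero 2 (specNorm_ne_zero hYne)) hx hYx
    · intro j l hj
      rw [mul_apply]
      refine Finset.sum_eq_zero fun i _ => ?_
      by_contra h
      have := hYsupp i j (left_ne_zero_of_mul h)
      simp only at hj
      omega
    · intro j l hj hl
      rw [transpose_mul_apply_of_eq_succ (fun i j h => (hYsupp i j h).2) (i := ⟨j + 1, by omega⟩)
        rfl hl]
      simp only at hj
      simp [Y, one_sub_headProj_mul_apply, lowerBidiagonal, hl, hα, hβ]
      omega
  rw [mul_one_sub_headProj_pred hk1 hkn]
  refine specNorm_lt_specNorm_updateRow (fun j => by_contra fun h => ?_) hYx ?_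
  · have := (hYsupp _ _ h).1
    simp only at this
    omega
  · simpa [single_dotProduct] using mul_ne_zero (hα _) hxk

end lowerBidiagonal

/-- `γ_k^{lsqr} < γ_k^{cgme} < γ_{k-1}^{lsqr}` for `1 ≤ k ≤ n-1`. -/
theorem cgme_rank_k_error_between_lsqr_errors
    (m n : ℕ)
    (A : Matrix (Fin m) (Fin n) ℝ)
    (P : Matrix (Fin m) (Fin (n + 1)) ℝ) (hP : Pᵀ * P = 1)
    (Q : Matrix (Fin n) (Fin n) ℝ) (hQ : Qᵀ * Q = 1)
    (α : Fin n → ℝ) (hα : ∀ i, 0 < α i)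
    (β : Fin n → ℝ) (hβ : ∀ i, 0 < β i)
    (B : Matrix (Fin (n + 1)) (Fin n) ℝ)
    (hB : ∀ (i : Fin (n + 1)) (j : Fin n),
      B i j = if (i : ℕ) = (j : ℕ) then α j
        else if (i : ℕ) = (j : ℕ) + 1 then β j else 0)
    (hA : A = P * B * Qᵀ)
    (k : ℕ) (hk1 : 1 ≤ k) (hk2 : k ≤ n - 1) :
    specNorm (A * (1 - colSub Q k (by omega) * (colSub Q k (by omega))ᵀ)) <
      specNorm ((1 - colSub P k (by omega) * (colSub P k (by omega))ᵀ) * A) ∧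
    specNorm ((1 - colSub P k (by omega) * (colSub P k (by omega))ᵀ) * A) <
      specNorm (A * (1 - colSub Q (k - 1) (by omega) * (colSub Q (k - 1) (by omega))ᵀ)) := by
  have hB' : B = lowerBidiagonal α β := by ext i j; exact hB i j
  have hα' (i : Fin n) : α i ≠ 0 := (hα i).ne'
  have hβ' (i : Fin n) : β i ≠ 0 := (hβ i).ne'
  simp only [colSub_mul_transpose, hA, hB', mul_one_sub_mul_transpose hQ,
    one_sub_mul_transpose_mul Q hP, specNorm_mul_transpose_isometry hQ, specNorm_isometry_mul hP]
  exact ⟨lowerBidiagonal.specNorm_mul_one_sub_headProj_lt hα' hβ' hk1 (by omega),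
    lowerBidiagonal.specNorm_one_sub_headProj_mul_lt hα' hβ' hk1 (by omega)⟩
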